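/- arXiv:2506.11379 — 6 statements merged into one kernel-verified Lean document; each statement's English description precedes it below -/
import Mathlib

section
/- Assume K is diagonal in the v_n-basis. Let y^δ ∈ Y and α > 0, and suppose the series x* = ∑_n (1/σ_n²) S_α(σ_n ⟨y^δ, u_n⟩) v_n converges in X. Then for every h ∈ X one has Φ_α(x* + h) ≥ Φ_α(x*) + ‖K h‖²; in particular x* is a global minimizer of Φ_α over X. -/
open scoped InnerProductSpace ENNReal

/-- The soft thresholding function `S_α`. -/
noncomputable def softThresh (α t : ℝ) : ℝ :=
  if t ≤ -(α / 2) then t + α / 2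
  else if α / 2 ≤ t then t - α / 2
  else 0

/-!
Since `‖K(x + h) - y‖² = ‖Kx - y‖² + 2⟪Kx - y, Kh⟫ + ‖Kh‖²`, it suffices that for every `n` the
number `2⟪y - Kx, K vₙ⟫` is a subgradient of `α|·|` at `⟪x, vₙ⟫`: expanding `h` in the Hilbert
basis `(vₙ)`, these subgradient inequalities add up to `Φ_α(x) + ‖Kh‖² ≤ Φ_α(x + h)`.
For `x = x*`, diagonality gives `2⟪y - Kx*, K vₙ⟫ = 2(tₙ - S_α(tₙ))` with `tₙ = σₙ⟪y, uₙ⟫`, a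
subgradient of `α|·|` at `⟪x*, vₙ⟫ = S_α(tₙ)/σₙ²` by the very definition of soft thresholding.
Finally `Φ_α(x*) < ∞`: the `tₙ = ⟪vₙ, K*y⟫` tend to zero by Bessel's inequality, so only finitely
many `S_α(tₙ)` are nonzero.
-/

theorem softThresh_eq_zero_of_abs_le {α t : ℝ} (ht : |t| ≤ α / 2) : softThresh α t = 0 := by
  rw [abs_le] at ht
  unfold softThresh
  split_ifs <;> linarith

theorem abs_two_mul_sub_softThresh_le {α : ℝ} (hα : 0 ≤ α) (t : ℝ) :
    |2 * (t - softThresh α t)| ≤ α := by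
  unfold softThresh
  split_ifs <;> rw [abs_le] <;> constructor <;> linarith

theorem two_mul_sub_softThresh_mul_mul_softThresh {α γ : ℝ} (hγ : 0 ≤ γ) (t : ℝ) :
    2 * (t - softThresh α t) * (γ * softThresh α t) = α * |γ * softThresh α t| := by
  rw [abs_mul, abs_of_nonneg hγ]
  unfold softThresh
  split_ifs with h₁ h₂
  · rw [abs_of_nonpos (by linarith)]; ring
  · rw [abs_of_nonneg (by linarith)]; ring
  · simp

theorem mul_le_mul_abs_add_sub_abs {a g s : ℝ} (hg : |g| ≤ a) (hgs : g * s = a * |s|) (d : ℝ) :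
    g * d ≤ a * (|s + d| - |s|) := by
  have : g * (s + d) ≤ a * |s + d| :=
    (le_abs_self _).trans (abs_mul g (s + d) ▸ mul_le_mul_of_nonneg_right hg (abs_nonneg _))
  linarith

theorem Orthonormal.inner_eq_of_hasSum {𝕜 E ι : Type*} [RCLike 𝕜] [NormedAddCommGroup E]
    [InnerProductSpace 𝕜 E] {v : ι → E} (hv : Orthonormal 𝕜 v) {f : ι → 𝕜} {x : E}
    (hx : HasSum (fun i => f i • v i) x) (i : ι) : ⟪v i, x⟫_𝕜 = f i := by
  classical
  refine (hx.mapL (innerSL 𝕜 (v i))).unique ?_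
  convert hasSum_ite_eq i (f i) using 1
  ext j
  simp only [innerSL_apply_apply, inner_smul_right, orthonormal_iff_ite.mp hv]
  rcases eq_or_ne j i with rfl | hji
  · simp
  · simp [hji, hji.symm]

theorem Orthonormal.finite_setOf_softThresh_inner_ne_zero {ι X : Type*} [NormedAddCommGroup X]
    [InnerProductSpace ℝ X] {v : ι → X} (hv : Orthonormal ℝ v) {α : ℝ} (hα : 0 < α) (w : X) :
    {i | softThresh α ⟪v i, w⟫_ℝ ≠ 0}.Finite := by
  have hsq : Filter.Tendsto (fun i => ‖⟪v i, w⟫_ℝ‖ ^ 2) Filter.cofinite (nhds 0) :=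
    (hv.inner_products_summable w).tendsto_cofinite_zero
  refine Filter.eventually_cofinite.mp
    ((hsq.eventually_lt_const (pow_pos (half_pos hα) 2)).mono fun i hi => ?_)
  exact softThresh_eq_zero_of_abs_le (lt_of_pow_lt_pow_left₀ 2 (half_pos hα).le hi).le

section Tikhonov

variable {ι X Y : Type*} [NormedAddCommGroup X] [InnerProductSpace ℝ X]
  [NormedAddCommGroup Y] [InnerProductSpace ℝ Y]

noncomputable def tikhonovL1 (K : X →L[ℝ] Y) (v : ι → X) (y : Y) (α : ℝ) (x : X) : ℝ≥0∞ :=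
  ENNReal.ofReal (‖K x - y‖ ^ 2) + ENNReal.ofReal α * ∑' i, ENNReal.ofReal |⟪x, v i⟫_ℝ|

variable {K : X →L[ℝ] Y} {v : ι → X} {y : Y} {α : ℝ} {x : X}

theorem tikhonovL1_eq_ofReal (hα : 0 ≤ α) (hx : Summable fun i => |⟪x, v i⟫_ℝ|) :
    tikhonovL1 K v y α x = ENNReal.ofReal (‖K x - y‖ ^ 2 + α * ∑' i, |⟪x, v i⟫_ℝ|) := by
  rw [tikhonovL1, ← ENNReal.ofReal_tsum_of_nonneg (fun i => abs_nonneg _) hx,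
    ← ENNReal.ofReal_mul hα, ENNReal.ofReal_add (by positivity)
      (mul_nonneg hα (tsum_nonneg fun i => abs_nonneg _))]

theorem tikhonovL1_eq_top (hα : 0 < α) (hx : ¬Summable fun i => |⟪x, v i⟫_ℝ|) :
    tikhonovL1 K v y α x = ⊤ := by
  have : ∑' i, ENNReal.ofReal |⟪x, v i⟫_ℝ| = ⊤ := by
    contrapose! hx
    simpa using ENNReal.summable_toReal hx
  rw [tikhonovL1, this, ENNReal.mul_top (ENNReal.ofReal_pos.mpr hα).ne', add_top]

theorem tikhonovL1_add_le_of_subgradient (e : HilbertBasis ι ℝ X) (hα : 0 < α)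
    (hx : Summable fun i => |⟪x, e i⟫_ℝ|)
    (hbound : ∀ i, |2 * ⟪y - K x, K (e i)⟫_ℝ| ≤ α)
    (hsign : ∀ i, 2 * ⟪y - K x, K (e i)⟫_ℝ * ⟪x, e i⟫_ℝ = α * |⟪x, e i⟫_ℝ|) (h : X) :
    tikhonovL1 K e y α x + ENNReal.ofReal (‖K h‖ ^ 2) ≤ tikhonovL1 K e y α (x + h) := by
  by_cases hxh : Summable fun i => |⟪x + h, e i⟫_ℝ|
  swap
  · rw [tikhonovL1_eq_top hα hxh]
    exact le_top
  rw [tikhonovL1_eq_ofReal hα.le hx, tikhonovL1_eq_ofReal hα.le hxh,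
    ← ENNReal.ofReal_add (by positivity) (by positivity)]
  refine ENNReal.ofReal_le_ofReal ?_
  have hcross : HasSum (fun i => 2 * ⟪y - K x, K (e i)⟫_ℝ * ⟪h, e i⟫_ℝ)
      (2 * ⟪y - K x, K h⟫_ℝ) := by
    have := ((e.hasSum_repr h).mapL ((innerSL ℝ (y - K x)).comp K)).mul_left 2
    simp only [ContinuousLinearMap.comp_apply, innerSL_apply_apply, map_smul,
      HilbertBasis.repr_apply_apply] at this
    refine this.congr_fun fun i => ?_
    rw [real_inner_comm h]
    ring
  have hsubgrad : ∀ i, 2 * ⟪y - K x, K (e i)⟫_ℝ * ⟪h, e i⟫_ℝ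
      ≤ α * (|⟪x + h, e i⟫_ℝ| - |⟪x, e i⟫_ℝ|) := fun i => by
    rw [inner_add_left]
    exact mul_le_mul_abs_add_sub_abs (hbound i) (hsign i) _
  have hl1 := hasSum_le hsubgrad hcross ((hxh.hasSum.sub hx.hasSum).mul_left α)
  have hquad : ‖K (x + h) - y‖ ^ 2 = ‖K h‖ ^ 2 - 2 * ⟪K h, y - K x⟫_ℝ + ‖y - K x‖ ^ 2 := by
    rw [← norm_sub_sq_real, map_add]
    congr 2
    abel
  rw [hquad, real_inner_comm, norm_sub_rev]
  linarith

end Tikhonov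

section Diagonal

variable {ι X Y : Type*} [NormedAddCommGroup X] [InnerProductSpace ℝ X]
  [NormedAddCommGroup Y] [InnerProductSpace ℝ Y] {K : X →L[ℝ] Y} {σ : ι → ℝ} {v : ι → X}
  {u : ι → Y}

theorem inner_sub_apply_of_hasSum (hu : Orthonormal ℝ u) (hKv : ∀ i, K (v i) = σ i • u i)
    {c : ι → ℝ} {x : X} (hx : HasSum (fun i => c i • v i) x) (y : Y) (i : ι) :
    ⟪y - K x, K (v i)⟫_ℝ = σ i * ⟪y, u i⟫_ℝ - σ i ^ 2 * c i := by
  have hKx : HasSum (fun i => (σ i * c i) • u i) (K x) := by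
    simpa [hKv, smul_smul, mul_comm] using hx.mapL K
  rw [hKv, inner_smul_right, inner_sub_left, real_inner_comm _ (K x), hu.inner_eq_of_hasSum hKx]
  ring

end Diagonal

theorem l1SVD_global_minimizer_general {X Y : Type*}
    [NormedAddCommGroup X] [InnerProductSpace ℝ X] [CompleteSpace X]
    [NormedAddCommGroup Y] [InnerProductSpace ℝ Y] [CompleteSpace Y]
    (K : X →L[ℝ] Y)
    (σ : ℕ → ℝ) (v : ℕ → X) (u : ℕ → Y)
    (hσ : ∀ n, 0 < σ n) (hv : Orthonormal ℝ v) (hu : Orthonormal ℝ u)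
    (hKv : ∀ n, K (v n) = σ n • u n)
    (hcomplete : (Submodule.span ℝ (Set.range v)).topologicalClosure = ⊤)
    (yδ : Y) (α : ℝ) (hα : 0 < α)
    (Φ : X → ℝ≥0∞)
    (hΦ : ∀ x, Φ x = ENNReal.ofReal (‖K x - yδ‖ ^ 2)
        + ENNReal.ofReal α * ∑' n, ENNReal.ofReal (|⟪x, v n⟫_ℝ|))
    (xstar : X)
    (hxstar : HasSum (fun n => ((σ n ^ 2)⁻¹ * softThresh α (σ n * ⟪yδ, u n⟫_ℝ)) • v n) xstar) :
    ∀ h : X, Φ xstar + ENNReal.ofReal (‖K h‖ ^ 2) ≤ Φ (xstar + h) := by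
  obtain rfl : Φ = tikhonovL1 K v yδ α := funext hΦ
  obtain ⟨e, rfl⟩ : ∃ e : HilbertBasis ℕ ℝ X, ⇑e = v :=
    ⟨_, HilbertBasis.coe_mk hv hcomplete.ge⟩
  set t : ℕ → ℝ := fun n => σ n * ⟪yδ, u n⟫_ℝ
  have hcoeff (n : ℕ) : ⟪xstar, e n⟫_ℝ = (σ n ^ 2)⁻¹ * softThresh α (t n) := by
    rw [real_inner_comm]
    exact hv.inner_eq_of_hasSum hxstar n
  have hgrad (n : ℕ) : ⟪yδ - K xstar, K (e n)⟫_ℝ = t n - softThresh α (t n) := by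
    rw [inner_sub_apply_of_hasSum hu hKv hxstar, mul_inv_cancel_left₀ (pow_ne_zero 2 (hσ n).ne')]
  have ht (n : ℕ) : t n = ⟪e n, ContinuousLinearMap.adjoint K yδ⟫_ℝ := by
    rw [ContinuousLinearMap.adjoint_inner_right, hKv, inner_smul_left, real_inner_comm]
    rfl
  have hsummable : Summable fun n => |⟪xstar, e n⟫_ℝ| := by
    refine summable_of_hasFiniteSupport
      ((hv.finite_setOf_softThresh_inner_ne_zero hα (ContinuousLinearMap.adjoint K yδ)).subset ?_)
    intro n hn hzero
    rw [Function.mem_support, hcoeff, ht, hzero] at hn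
    simp at hn
  refine tikhonovL1_add_le_of_subgradient e hα hsummable (fun n => ?_) (fun n => ?_)
  · rw [hgrad]
    exact abs_two_mul_sub_softThresh_le hα.le _
  · rw [hgrad, hcoeff]
    exact two_mul_sub_softThresh_mul_mul_softThresh (by positivity) _

/-- If the compact operator `K` is diagonal in the `v n`-basis, `α > 0` and the series
`x* = ∑ (1/σ_n²) S_α(σ_n ⟨y^δ, u_n⟩) v_n` converges in `X`, then for every `h ∈ X` one has
`Φ_α(x* + h) ≥ Φ_α(x*) + ‖K h‖²`; in particular `x*` is a global minimizer of `Φ_α`. -/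
theorem l1SVD_global_minimizer {X Y : Type*}
    [NormedAddCommGroup X] [InnerProductSpace ℝ X] [CompleteSpace X]
    [NormedAddCommGroup Y] [InnerProductSpace ℝ Y] [CompleteSpace Y]
    (K : X →L[ℝ] Y) (hK : IsCompactOperator K)
    (σ : ℕ → ℝ) (v : ℕ → X) (u : ℕ → Y)
    (hσ : ∀ n, 0 < σ n) (hv : Orthonormal ℝ v) (hu : Orthonormal ℝ u)
    (hKv : ∀ n, K (v n) = σ n • u n)
    (hKadj : ∀ n, (ContinuousLinearMap.adjoint K) (u n) = σ n • v n)
    (hcomplete : (Submodule.span ℝ (Set.range v)).topologicalClosure = ⊤)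
    (yδ : Y) (α : ℝ) (hα : 0 < α)
    (Φ : X → ℝ≥0∞)
    (hΦ : ∀ x, Φ x = ENNReal.ofReal (‖K x - yδ‖ ^ 2)
        + ENNReal.ofReal α * ∑' n, ENNReal.ofReal (|⟪x, v n⟫_ℝ|))
    (xstar : X)
    (hxstar : HasSum (fun n => ((σ n ^ 2)⁻¹ * softThresh α (σ n * ⟪yδ, u n⟫_ℝ)) • v n) xstar) :
    ∀ h : X, Φ xstar + ENNReal.ofReal (‖K h‖ ^ 2) ≤ Φ (xstar + h) :=
  l1SVD_global_minimizer_general K σ v u hσ hv hu hKv hcomplete yδ α hα Φ hΦ xstar hxstar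
end

section
/- Assume K is diagonal in the v_n-basis. Let y^δ ∈ Y and α > 0. If x̂ ∈ X with ∑_n |⟨x̂, v_n⟩| < ∞ is a global minimizer of Φ_α over X, then for every n ∈ ℕ its coefficients are given by the soft-thresholding formula ⟨x̂, v_n⟩ = (1/σ_n²) S_α(σ_n ⟨y^δ, u_n⟩). -/
open scoped InnerProductSpace ENNReal

/-- Key real-analysis lemma: one-dimensional optimality condition forces the
soft-thresholding formula. -/
lemma softThresh_key (σ α c d : ℝ) (hσ : 0 < σ) (hα : 0 < α)
    (h : ∀ t : ℝ, 0 ≤ σ ^ 2 * t ^ 2 + 2 * t * (σ ^ 2 * c - σ * d)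
        + α * (|c + t| - |c|)) :
    c = (σ ^ 2)⁻¹ * softThresh α (σ * d) := by
  have hσ2 : (0:ℝ) < σ ^ 2 := by positivity
  set b := σ * d with hb
  set S := softThresh α b with hS
  set s := (σ ^ 2)⁻¹ * S with hs
  have hss : σ ^ 2 * s = S := by
    rw [hs]; field_simp
  -- (B): from optimality at t = s - c
  have hB := h (s - c)
  have hcs : c + (s - c) = s := by ring
  rw [hcs] at hB
  -- (A): s is a global minimizer, compared against c
  have hA : 0 ≤ 2 * (S - b) * (c - s) + α * (|c| - |s|) := by
    rw [hS]; unfold softThresh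
    split_ifs with h1 h2
    · -- b ≤ -α/2, S = b + α/2 ≤ 0, s ≤ 0
      have hS0 : b + α / 2 ≤ 0 := by linarith
      have hs0 : s ≤ 0 := by
        rw [hs, hS]; unfold softThresh; rw [if_pos h1]
        exact mul_nonpos_of_nonneg_of_nonpos (by positivity) hS0
      rw [abs_of_nonpos hs0]
      nlinarith [neg_abs_le c]
    · -- α/2 ≤ b, S = b - α/2 ≥ 0, s ≥ 0
      have hS0 : 0 ≤ b - α / 2 := by linarith
      have hs0 : 0 ≤ s := by
        rw [hs, hS]; unfold softThresh; rw [if_neg h1, if_pos h2]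
        positivity
      rw [abs_of_nonneg hs0]
      nlinarith [le_abs_self c]
    · -- |b| < α/2, S = 0, s = 0
      have hs0 : s = 0 := by
        rw [hs, hS]; unfold softThresh; rw [if_neg h1, if_neg h2]; ring
      rw [hs0, abs_zero]
      push_neg at h1 h2
      rcases abs_cases c with ⟨hc1, hc2⟩ | ⟨hc1, hc2⟩
      · nlinarith [mul_nonneg (by linarith : (0:ℝ) ≤ α / 2 - b) hc2]
      · nlinarith [mul_nonneg (by linarith : (0:ℝ) ≤ α / 2 + b)
          (by linarith : (0:ℝ) ≤ -c)]
  -- combine: (s - c)^2 ≤ 0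
  rw [← hss] at hA
  have hsq : (s - c) ^ 2 ≤ 0 := by nlinarith [hB, hA, hσ2]
  have h00 : (s - c) ^ 2 = 0 := le_antisymm hsq (sq_nonneg _)
  have h0 : s - c = 0 := by
    exact pow_eq_zero_iff two_ne_zero |>.mp h00
  linarith

/-- If the compact operator `K` is diagonal in the `v n`-basis, `α > 0`, and
`x̂ ∈ X` with `∑ |⟨x̂, v_n⟩| < ∞` is a global minimizer of `Φ_α`, then its coefficients are
given by the soft-thresholding formula `⟨x̂, v_n⟩ = (1/σ_n²) S_α(σ_n ⟨y^δ, u_n⟩)`. -/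
theorem l1SVD_coeff_of_minimizer {X Y : Type*}
    [NormedAddCommGroup X] [InnerProductSpace ℝ X] [CompleteSpace X]
    [NormedAddCommGroup Y] [InnerProductSpace ℝ Y] [CompleteSpace Y]
    (K : X →L[ℝ] Y) (hK : IsCompactOperator K)
    (σ : ℕ → ℝ) (v : ℕ → X) (u : ℕ → Y)
    (hσ : ∀ n, 0 < σ n) (hv : Orthonormal ℝ v) (hu : Orthonormal ℝ u)
    (hKv : ∀ n, K (v n) = σ n • u n)
    (hKadj : ∀ n, (ContinuousLinearMap.adjoint K) (u n) = σ n • v n)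
    (hcomplete : (Submodule.span ℝ (Set.range v)).topologicalClosure = ⊤)
    (yδ : Y) (α : ℝ) (hα : 0 < α)
    (Φ : X → ℝ≥0∞)
    (hΦ : ∀ x, Φ x = ENNReal.ofReal (‖K x - yδ‖ ^ 2)
        + ENNReal.ofReal α * ∑' n, ENNReal.ofReal (|⟪x, v n⟫_ℝ|))
    (xhat : X)
    (hsum : Summable fun n => |⟪xhat, v n⟫_ℝ|)
    (hmin : ∀ x : X, Φ xhat ≤ Φ x) :
    ∀ n : ℕ, ⟪xhat, v n⟫_ℝ = (σ n ^ 2)⁻¹ * softThresh α (σ n * ⟪yδ, u n⟫_ℝ) := by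
  intro n
  set c := ⟪xhat, v n⟫_ℝ with hc
  set d := ⟪yδ, u n⟫_ℝ with hd
  have hσn := hσ n
  have hvv : ∀ i j, ⟪v i, v j⟫_ℝ = if i = j then 1 else 0 := orthonormal_iff_ite.mp hv
  have hun : ‖u n‖ = 1 := hu.1 n
  -- the residual inner product
  have hKu : ⟪K xhat - yδ, u n⟫_ℝ = σ n * c - d := by
    rw [inner_sub_left, ← ContinuousLinearMap.adjoint_inner_right K xhat (u n), hKadj,
      real_inner_smul_right, ← hc, ← hd]
  -- a convenient closed-form for Φ
  have hΦreal : ∀ x : X, Summable (fun m => |⟪x, v m⟫_ℝ|) →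
      Φ x = ENNReal.ofReal (‖K x - yδ‖ ^ 2 + α * ∑' m, |⟪x, v m⟫_ℝ|) := by
    intro x hx
    rw [hΦ x, ← ENNReal.ofReal_tsum_of_nonneg (fun m => abs_nonneg _) hx,
      ← ENNReal.ofReal_mul hα.le, ← ENNReal.ofReal_add (by positivity)
        (mul_nonneg hα.le (tsum_nonneg fun m => abs_nonneg _))]
  -- the key one-dimensional inequality
  have key : ∀ t : ℝ, 0 ≤ (σ n) ^ 2 * t ^ 2 + 2 * t * ((σ n) ^ 2 * c - σ n * d)
      + α * (|c + t| - |c|) := by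
    intro t
    set x := xhat + t • v n with hx
    have hcoef : ∀ m, ⟪x, v m⟫_ℝ = if m = n then c + t else ⟪xhat, v m⟫_ℝ := by
      intro m
      rw [hx, inner_add_left, real_inner_smul_left, hvv n m]
      by_cases h : m = n
      · subst h
        rw [if_pos rfl, if_pos rfl, mul_one, ← hc]
      · rw [if_neg (Ne.symm h), if_neg h, mul_zero, add_zero]
    have habs : (fun m => |⟪x, v m⟫_ℝ|) =
        Function.update (fun m => |⟪xhat, v m⟫_ℝ|) n |c + t| := by
      funext m
      rw [hcoef m]
      by_cases h : m = n <;> simp [Function.update, h]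
    have hsum' : Summable fun m => |⟪x, v m⟫_ℝ| := by
      rw [habs]; exact hsum.update n _
    -- the tsums
    have ht1 := Summable.tsum_eq_add_tsum_ite hsum n
    have ht2 := Summable.tsum_eq_add_tsum_ite hsum' n
    have hite : (fun m => if m = n then 0 else |⟪x, v m⟫_ℝ|)
        = fun m => if m = n then 0 else |⟪xhat, v m⟫_ℝ| := by
      funext m
      by_cases h : m = n <;> simp [h, hcoef m]
    rw [hite] at ht2
    have hxn : |⟪x, v n⟫_ℝ| = |c + t| := by rw [hcoef n, if_pos rfl]
    -- the residual norm
    have hKx : K x - yδ = (K xhat - yδ) + (t * σ n) • u n := by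
      rw [hx, map_add, map_smul, hKv n, smul_smul]
      abel
    have hnorm : ‖K x - yδ‖ ^ 2
        = ‖K xhat - yδ‖ ^ 2 + 2 * (t * σ n) * (σ n * c - d) + (t * σ n) ^ 2 := by
      rw [hKx, norm_add_sq_real, real_inner_smul_right, hKu, norm_smul, Real.norm_eq_abs,
        hun, mul_one, sq_abs]
      ring
    -- compare Φ values
    have hmin' := hmin x
    rw [hΦreal xhat hsum, hΦreal x hsum'] at hmin'
    have hineq : ‖K xhat - yδ‖ ^ 2 + α * ∑' m, |⟪xhat, v m⟫_ℝ|
        ≤ ‖K x - yδ‖ ^ 2 + α * ∑' m, |⟪x, v m⟫_ℝ| := by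
      rw [ENNReal.ofReal_le_ofReal_iff (add_nonneg (by positivity)
        (mul_nonneg hα.le (tsum_nonneg fun m => abs_nonneg _)))] at hmin'
      exact hmin'
    rw [ht1, ht2, hxn, hnorm, ← hc] at hineq
    nlinarith [hineq]
  exact softThresh_key (σ n) α c d hσn hα key
end

section
/- Let {(σ_n, v_n, u_n)}_{n∈ℕ} be a singular system for the compact linear operator K : X → Y. Let y ∈ Y, α > 0, and suppose c(α) > 0 satisfies c(α) σ_n ≥ 1 for every n such that |σ_n ⟨y, u_n⟩| > α/2. Then ∑_n ( S_α(σ_n ⟨y, u_n⟩) / σ_n² )² ≤ c(α)² ‖y‖²; in particular the series R_α y = ∑_n (1/σ_n²) S_α(σ_n ⟨y, u_n⟩) v_n converges in X and ‖R_α y‖ ≤ c(α) ‖y‖. -/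
open scoped InnerProductSpace

lemma softThresh_abs_le (α t : ℝ) (hα : 0 < α) : |softThresh α t| ≤ |t| := by
  unfold softThresh
  split_ifs with h1 h2
  · rw [abs_of_nonpos (by linarith), abs_of_nonpos (by linarith)]; linarith
  · rw [abs_of_nonneg (by linarith), abs_of_nonneg (by linarith)]; linarith
  · simp [abs_nonneg]

lemma softThresh_eq_zero (α t : ℝ) (h : |t| ≤ α / 2) : softThresh α t = 0 := by
  rw [abs_le] at h
  unfold softThresh
  split_ifs with h1 h2
  · linarith [h.1]
  · linarith [h.2]
  · rfl

/-- If `c(α) σ_n ≥ 1` for every `n` with `|σ_n ⟨y, u_n⟩| > α/2`, then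
`∑ (S_α(σ_n ⟨y, u_n⟩)/σ_n²)² ≤ c(α)² ‖y‖²`; in particular the series
`R_α y = ∑ (1/σ_n²) S_α(σ_n ⟨y, u_n⟩) v_n` converges in `X` and `‖R_α y‖ ≤ c(α) ‖y‖`. -/
theorem l1SVD_bounded {X Y : Type*}
    [NormedAddCommGroup X] [InnerProductSpace ℝ X] [CompleteSpace X]
    [NormedAddCommGroup Y] [InnerProductSpace ℝ Y] [CompleteSpace Y]
    (K : X →L[ℝ] Y) (hK : IsCompactOperator K)
    (σ : ℕ → ℝ) (v : ℕ → X) (u : ℕ → Y)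
    (hσ : ∀ n, 0 < σ n) (hv : Orthonormal ℝ v) (hu : Orthonormal ℝ u)
    (hKv : ∀ n, K (v n) = σ n • u n)
    (hKadj : ∀ n, (ContinuousLinearMap.adjoint K) (u n) = σ n • v n)
    (y : Y) (α : ℝ) (hα : 0 < α)
    (c : ℝ) (hc : 0 < c)
    (hcσ : ∀ n, α / 2 < |σ n * ⟪y, u n⟫_ℝ| → 1 ≤ c * σ n) :
    Summable (fun n => (softThresh α (σ n * ⟪y, u n⟫_ℝ) / σ n ^ 2) ^ 2) ∧
    (∑' n, (softThresh α (σ n * ⟪y, u n⟫_ℝ) / σ n ^ 2) ^ 2 ≤ c ^ 2 * ‖y‖ ^ 2) ∧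
    ∃ x : X, HasSum (fun n => ((σ n ^ 2)⁻¹ * softThresh α (σ n * ⟪y, u n⟫_ℝ)) • v n) x ∧
      ‖x‖ ≤ c * ‖y‖ := by
  set t : ℕ → ℝ := fun n => σ n * ⟪y, u n⟫_ℝ with ht
  set F : ℕ → ℝ := fun n => (softThresh α (t n) / σ n ^ 2) ^ 2 with hF
  set g : ℕ → ℝ := fun n => c ^ 2 * ⟪y, u n⟫_ℝ ^ 2 with hg
  -- pointwise bound F n ≤ g n
  have hbound : ∀ n, F n ≤ g n := by
    intro n
    by_cases hcase : |t n| ≤ α / 2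
    · have h0 : F n = 0 := by
        simp [hF, softThresh_eq_zero α (t n) hcase]
      rw [h0]; positivity
    · push_neg at hcase
      have h1 : (1 : ℝ) ≤ c * σ n := hcσ n hcase
      have hσn := hσ n
      have habs : |softThresh α (t n)| ≤ |t n| := softThresh_abs_le α (t n) hα
      have h2 : (softThresh α (t n) / σ n ^ 2) ^ 2 ≤ (t n / σ n ^ 2) ^ 2 := by
        rw [div_pow, div_pow, ← sq_abs (softThresh α (t n)), ← sq_abs (t n)]
        gcongr
      refine h2.trans ?_
      have h3 : t n / σ n ^ 2 = ⟪y, u n⟫_ℝ / σ n := by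
        field_simp [ht]; ring
      rw [h3, div_pow]
      rw [div_le_iff₀ (by positivity)]
      have h4 : (1:ℝ) ≤ (c * σ n) ^ 2 := by nlinarith
      calc ⟪y, u n⟫_ℝ ^ 2 = ⟪y, u n⟫_ℝ ^ 2 * 1 := by ring
        _ ≤ ⟪y, u n⟫_ℝ ^ 2 * (c * σ n) ^ 2 := by
            apply mul_le_mul_of_nonneg_left h4 (by positivity)
        _ = c ^ 2 * ⟪y, u n⟫_ℝ ^ 2 * σ n ^ 2 := by ring
  have hF_nonneg : ∀ n, 0 ≤ F n := fun n => sq_nonneg _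
  -- Bessel
  have hbessel : Summable fun n => ⟪y, u n⟫_ℝ ^ 2 := by
    have := hu.inner_products_summable y
    simpa [real_inner_comm, sq_abs] using this
  have hg_sum : Summable g := hbessel.mul_left _
  have hFsum : Summable F := Summable.of_nonneg_of_le hF_nonneg hbound hg_sum
  have htsum_bessel : ∑' n, ⟪y, u n⟫_ℝ ^ 2 ≤ ‖y‖ ^ 2 := by
    have := hu.tsum_inner_products_le y
    simpa [real_inner_comm, sq_abs] using this
  have htsum : ∑' n, F n ≤ c ^ 2 * ‖y‖ ^ 2 := by
    calc ∑' n, F n ≤ ∑' n, g n := Summable.tsum_le_tsum hbound hFsum hg_sum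
      _ = c ^ 2 * ∑' n, ⟪y, u n⟫_ℝ ^ 2 := tsum_mul_left
      _ ≤ c ^ 2 * ‖y‖ ^ 2 := by
          apply mul_le_mul_of_nonneg_left htsum_bessel (by positivity)
  refine ⟨hFsum, htsum, ?_⟩
  -- coefficients
  set a : ℕ → ℝ := fun n => (σ n ^ 2)⁻¹ * softThresh α (t n) with ha
  have haF : ∀ n, a n ^ 2 = F n := by
    intro n; simp only [ha, hF]; rw [div_eq_inv_mul]
  -- summability of the vector series
  have hfam := hv.orthogonalFamily
  have hsum : Summable (fun n => a n • v n) := by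
    rw [show (fun n => a n • v n) =
        (fun n => (LinearIsometry.toSpanSingleton ℝ X (hv.1 n)) (a n)) from rfl,
      hfam.summable_iff_norm_sq_summable]
    simp only [Real.norm_eq_abs, sq_abs, haF]
    exact hFsum
  obtain ⟨x, hx⟩ := hsum
  refine ⟨x, hx, ?_⟩
  -- norm bound on partial sums
  have hpartial : ∀ s : Finset ℕ, ‖∑ n ∈ s, a n • v n‖ ≤ c * ‖y‖ := by
    intro s
    have hns : ‖∑ n ∈ s, a n • v n‖ ^ 2 = ∑ n ∈ s, ‖a n‖ ^ 2 := by
      simpa using hfam.norm_sum (fun n => a n) s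
    have h1 : ∑ n ∈ s, ‖a n‖ ^ 2 ≤ ∑' n, F n := by
      have : ∑ n ∈ s, ‖a n‖ ^ 2 = ∑ n ∈ s, F n := by
        apply Finset.sum_congr rfl; intro n _
        rw [Real.norm_eq_abs, sq_abs, haF]
      rw [this]
      exact Summable.sum_le_tsum s (fun n _ => hF_nonneg n) hFsum
    have h2 : ‖∑ n ∈ s, a n • v n‖ ^ 2 ≤ (c * ‖y‖) ^ 2 := by
      rw [hns]
      refine h1.trans (htsum.trans ?_)
      rw [mul_pow]
    have h3 := Real.sqrt_le_sqrt h2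
    rwa [Real.sqrt_sq (norm_nonneg _), Real.sqrt_sq (by positivity)] at h3
  have htend : Filter.Tendsto (fun s : Finset ℕ => ‖∑ n ∈ s, a n • v n‖)
      Filter.atTop (nhds ‖x‖) :=
    (continuous_norm.tendsto x).comp hx
  exact le_of_tendsto' htend hpartial
end

section
/- Let {(σ_n, v_n, u_n)}_{n∈ℕ} be a singular system for the compact linear operator K : X → Y. For every x in the closed linear span of {v_n : n ∈ ℕ}, the ℓ¹-SVD reconstruction of the exact data K x converges to x as the regularization parameter tends to zero: ‖ ∑_n (1/σ_n²) S_α(σ_n ⟨K x, u_n⟩) v_n − x ‖ → 0 as α → 0⁺. -/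
/-!
By `K* u_n = σ_n v_n`, the `n`-th reconstruction coefficient is `σ_n⁻² S_α(σ_n² a_n)` with
`a_n = ⟪v_n, x⟫`, and `x = ∑ a_n v_n` since `x` lies in the closed span of the orthonormal
family `v`. Soft thresholding moves its argument by at most `α/2` and never past `0`, so each
coefficient converges to `a_n` and its error is dominated by `|a_n|`. By Parseval the squared
reconstruction error is the sum of the squared coefficient errors, which tends to `0` by
dominated convergence for series.
-/

open scoped InnerProductSpace Topology

open Filter Submodule

section SoftThresholding

variable {α t : ℝ}

lemma abs_softThresh_sub_le_half (hα : 0 ≤ α) : |softThresh α t - t| ≤ α / 2 := by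
  unfold softThresh
  split_ifs <;> rw [abs_le] <;> constructor <;> linarith

lemma abs_softThresh_sub_le_abs (hα : 0 ≤ α) : |softThresh α t - t| ≤ |t| := by
  unfold softThresh
  split_ifs <;> cases abs_cases t <;> rw [abs_le] <;> constructor <;> linarith

lemma tendsto_softThresh_nhdsGT_zero (t : ℝ) :
    Tendsto (fun α => softThresh α t) (𝓝[>] 0) (𝓝 t) := by
  have hhalf : Tendsto (fun α : ℝ => α / 2) (𝓝[>] 0) (𝓝 0) :=
    (continuous_id.div_const 2).tendsto' 0 0 (zero_div 2) |>.mono_left nhdsWithin_le_nhds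
  refine tendsto_iff_norm_sub_tendsto_zero.2 <| squeeze_zero' (.of_forall fun _ => norm_nonneg _)
    ?_ hhalf
  filter_upwards [self_mem_nhdsWithin] with α hα
  exact abs_softThresh_sub_le_half (le_of_lt hα)

lemma abs_inv_mul_softThresh_mul_sub_le {s : ℝ} (hα : 0 ≤ α) (hs : 0 < s) :
    |s⁻¹ * softThresh α (s * t) - t| ≤ |t| := by
  have hs' : s ≠ 0 := hs.ne'
  calc |s⁻¹ * softThresh α (s * t) - t| = |s⁻¹ * (softThresh α (s * t) - s * t)| := by
        rw [mul_sub, inv_mul_cancel_left₀ hs']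
    _ = s⁻¹ * |softThresh α (s * t) - s * t| := by rw [abs_mul, abs_of_pos (inv_pos.2 hs)]
    _ ≤ s⁻¹ * |s * t| := mul_le_mul_of_nonneg_left (abs_softThresh_sub_le_abs hα) (by positivity)
    _ = |t| := by rw [abs_mul, abs_of_pos hs, inv_mul_cancel_left₀ hs']

lemma tendsto_inv_mul_softThresh_mul {s : ℝ} (hs : s ≠ 0) (t : ℝ) :
    Tendsto (fun α => s⁻¹ * softThresh α (s * t)) (𝓝[>] 0) (𝓝 t) := by
  simpa [inv_mul_cancel_left₀ hs] using (tendsto_softThresh_nhdsGT_zero (s * t)).const_mul s⁻¹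

end SoftThresholding

section Orthonormal

variable {𝕜 E ι : Type*} [RCLike 𝕜] [NormedAddCommGroup E] [InnerProductSpace 𝕜 E]
  [CompleteSpace E] {v : ι → E}

theorem Orthonormal.hasSum_inner_smul_of_mem_closure_span (hv : Orthonormal 𝕜 v) {x : E}
    (hx : x ∈ (span 𝕜 (Set.range v)).topologicalClosure) :
    HasSum (fun i => ⟪v i, x⟫_𝕜 • v i) x := by
  set U := (span 𝕜 (Set.range v)).topologicalClosure
  have : CompleteSpace U := (span 𝕜 (Set.range v)).isClosed_topologicalClosure.completeSpace_coe
  have hvU : ∀ i, v i ∈ U := fun i => le_topologicalClosure _ (subset_span ⟨i, rfl⟩)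
  have hsp : ⊤ ≤ (span 𝕜 (Set.range (Set.codRestrict v U hvU))).topologicalClosure := by
    have hspan : Subtype.val '' (span 𝕜 (Set.range (Set.codRestrict v U hvU)) : Set U) =
        span 𝕜 (Set.range v) := by
      rw [← U.coe_subtype, ← map_coe, map_span, ← Set.range_comp]
      rfl
    rw [top_le_iff, ← dense_iff_topologicalClosure_eq_top,
      Topology.IsInducing.subtypeVal.dense_iff]
    intro y
    convert y.2
    exact (congrArg closure hspan).trans (topologicalClosure_coe _).symm
  let b := HilbertBasis.mk (hv.codRestrict U hvU) hsp
  simpa [b, orthogonalProjectionOnto_mem_subspace_eq_self ⟨x, hx⟩] using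
    (b.hasSum_orthogonalProjectionOnto x).mapL U.subtypeL

theorem Orthonormal.summable_smul_iff (hv : Orthonormal 𝕜 v) {c : ι → 𝕜} :
    (Summable fun i => c i • v i) ↔ Summable fun i => ‖c i‖ ^ 2 := by
  simpa using hv.orthogonalFamily.summable_iff_norm_sq_summable c

theorem Orthonormal.norm_tsum_smul_sq (hv : Orthonormal 𝕜 v) {c : ι → 𝕜}
    (hc : Summable fun i => ‖c i‖ ^ 2) :
    ‖∑' i, c i • v i‖ ^ 2 = ∑' i, ‖c i‖ ^ 2 := by
  let f : lp (fun _ : ι => 𝕜) 2 := ⟨c, memℓp_gen (by simpa using hc)⟩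
  have hf : hv.orthogonalFamily.linearIsometry f = ∑' i, c i • v i := by
    simp [OrthogonalFamily.linearIsometry_apply, f]
  have hnorm := lp.norm_rpow_eq_tsum (p := 2) (by norm_num) f
  simp only [ENNReal.toReal_ofNat, Real.rpow_two] at hnorm
  rw [← hf, LinearIsometry.norm_map, hnorm]

theorem Orthonormal.norm_tsum_smul_sub_sq (hv : Orthonormal 𝕜 v) {a c : ι → 𝕜} {x : E}
    (hx : HasSum (fun i => a i • v i) x) (hca : Summable fun i => ‖c i - a i‖ ^ 2) :
    ‖(∑' i, c i • v i) - x‖ ^ 2 = ∑' i, ‖c i - a i‖ ^ 2 := by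
  have hc : HasSum (fun i => c i • v i) (x + ∑' i, (c i - a i) • v i) := by
    simpa [sub_smul] using hx.add (hv.summable_smul_iff.2 hca).hasSum
  rw [hc.tsum_eq, add_sub_cancel_left, hv.norm_tsum_smul_sq hca]

theorem Orthonormal.tendsto_norm_tsum_smul_sub {α : Type*} {l : Filter α}
    (hv : Orthonormal 𝕜 v) {a : ι → 𝕜} {c : α → ι → 𝕜} {x : E}
    (hx : HasSum (fun i => a i • v i) x) (hbound : ∀ᶠ t in l, ∀ i, ‖c t i - a i‖ ≤ ‖a i‖)
    (hlim : ∀ i, Tendsto (fun t => c t i) l (𝓝 (a i))) :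
    Tendsto (fun t => ‖(∑' i, c t i • v i) - x‖) l (𝓝 0) := by
  have ha : Summable fun i => ‖a i‖ ^ 2 := hv.summable_smul_iff.1 hx.summable
  have hsq_bound : ∀ᶠ t in l, ∀ i, ‖c t i - a i‖ ^ 2 ≤ ‖a i‖ ^ 2 :=
    hbound.mono fun t ht i => pow_le_pow_left₀ (norm_nonneg _) (ht i) 2
  have hsq : Tendsto (fun t => ∑' i, ‖c t i - a i‖ ^ 2) l (𝓝 0) := by
    simpa using tendsto_tsum_of_dominated_convergence (g := fun _ => (0 : ℝ)) ha
      (fun i => by simpa using ((tendsto_sub_nhds_zero_iff.2 (hlim i)).norm.pow 2))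
      (by simpa using hsq_bound)
  have hnorm : ∀ᶠ t in l, √(∑' i, ‖c t i - a i‖ ^ 2) = ‖(∑' i, c t i • v i) - x‖ :=
    hsq_bound.mono fun t ht => by
      rw [← hv.norm_tsum_smul_sub_sq hx (ha.of_nonneg_of_le (fun _ => by positivity) ht),
        Real.sqrt_sq (norm_nonneg _)]
  simpa using hsq.sqrt.congr' hnorm

end Orthonormal

theorem l1SVD_convergence_general {X Y : Type*}
    [NormedAddCommGroup X] [InnerProductSpace ℝ X] [CompleteSpace X]
    [NormedAddCommGroup Y] [InnerProductSpace ℝ Y] [CompleteSpace Y]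
    (K : X →L[ℝ] Y)
    (σ : ℕ → ℝ) (v : ℕ → X) (u : ℕ → Y)
    (hσ : ∀ n, 0 < σ n) (hv : Orthonormal ℝ v)
    (hKadj : ∀ n, (ContinuousLinearMap.adjoint K) (u n) = σ n • v n)
    (x : X) (hx : x ∈ (Submodule.span ℝ (Set.range v)).topologicalClosure) :
    Filter.Tendsto
      (fun α : ℝ =>
        ‖(∑' n, ((σ n ^ 2)⁻¹ * softThresh α (σ n * ⟪K x, u n⟫_ℝ)) • v n) - x‖)
      (𝓝[>] 0) (𝓝 0) := by
  have hcoef : ∀ n, σ n * ⟪K x, u n⟫_ℝ = σ n ^ 2 * ⟪v n, x⟫_ℝ := fun n => by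
    rw [← ContinuousLinearMap.adjoint_inner_right, hKadj, real_inner_smul_right,
      real_inner_comm]
    ring
  simp_rw [hcoef]
  refine hv.tendsto_norm_tsum_smul_sub (hv.hasSum_inner_smul_of_mem_closure_span hx) ?_
    fun n => tendsto_inv_mul_softThresh_mul (pow_pos (hσ n) 2).ne' _
  filter_upwards [self_mem_nhdsWithin] with α hα n
  exact abs_inv_mul_softThresh_mul_sub_le (le_of_lt hα) (pow_pos (hσ n) 2)

/-- For every `x` in the closed linear span of the right singular vectors `v n`, the
`ℓ¹`-SVD reconstruction of the exact data `K x` converges to `x` as `α → 0⁺`. -/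
theorem l1SVD_convergence {X Y : Type*}
    [NormedAddCommGroup X] [InnerProductSpace ℝ X] [CompleteSpace X]
    [NormedAddCommGroup Y] [InnerProductSpace ℝ Y] [CompleteSpace Y]
    (K : X →L[ℝ] Y) (hK : IsCompactOperator K)
    (σ : ℕ → ℝ) (v : ℕ → X) (u : ℕ → Y)
    (hσ : ∀ n, 0 < σ n) (hv : Orthonormal ℝ v) (hu : Orthonormal ℝ u)
    (hKv : ∀ n, K (v n) = σ n • u n)
    (hKadj : ∀ n, (ContinuousLinearMap.adjoint K) (u n) = σ n • v n)
    (x : X) (hx : x ∈ (Submodule.span ℝ (Set.range v)).topologicalClosure) :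
    Filter.Tendsto
      (fun α : ℝ =>
        ‖(∑' n, ((σ n ^ 2)⁻¹ * softThresh α (σ n * ⟪K x, u n⟫_ℝ)) • v n) - x‖)
      (𝓝[>] 0) (𝓝 0) :=
  l1SVD_convergence_general K σ v u hσ hv hKadj x hx
end

section
/- Let σ > 0, α > 0 and b ∈ ℝ satisfy σ^{1/3} b > (3/4) α^{2/3}. Define x* = (2 b / (3 σ)) (1 + cos((2/3)π − (2/3) arccos((α/8) (σ^{1/3} b / 3)^{−3/2}))). Then x* > 0 and x* satisfies the first-order optimality equation 2 σ (σ x* − b) + α / (2 √(x*)) = 0. -/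
set_option maxHeartbeats 1000000


/-- If `σ, α > 0`, `b ∈ ℝ` with `σ^{1/3} b > (3/4) α^{2/3}`, then
`x* = (2b/(3σ))(1 + cos((2/3)π − (2/3) arccos((α/8)(σ^{1/3} b/3)^{−3/2})))` is positive and
satisfies the first-order optimality equation `2σ(σ x* − b) + α/(2√x*) = 0`. -/
theorem halfThresh_stationary_point (σ α b : ℝ) (hσ : 0 < σ) (hα : 0 < α)
    (hb : 3 / 4 * α ^ ((2 : ℝ) / 3) < σ ^ ((1 : ℝ) / 3) * b)
    (xstar : ℝ)
    (hx : xstar = 2 * b / (3 * σ) *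
      (1 + Real.cos (2 / 3 * Real.pi -
        2 / 3 * Real.arccos (α / 8 * (σ ^ ((1 : ℝ) / 3) * b / 3) ^ (-(3 : ℝ) / 2))))) :
    0 < xstar ∧ 2 * σ * (σ * xstar - b) + α / (2 * Real.sqrt xstar) = 0 := by
  have hσ3 : 0 < σ ^ ((1:ℝ)/3) := Real.rpow_pos_of_pos hσ _
  have hα23 : 0 < α ^ ((2:ℝ)/3) := Real.rpow_pos_of_pos hα _
  set t : ℝ := σ ^ ((1:ℝ)/3) * b with htdef
  have ht : 0 < t := lt_trans (by positivity) hb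
  have hbpos : 0 < b := by nlinarith
  have ht3 : 0 < t / 3 := by linarith
  set s : ℝ := Real.sqrt (b / (3*σ)) with hsdef
  have hs : 0 < s := Real.sqrt_pos.2 (by positivity)
  have hs2 : s ^ 2 = b / (3*σ) := Real.sq_sqrt (by positivity)
  -- cube of σ^{1/3}
  have hcube : (σ ^ ((1:ℝ)/3)) ^ (3:ℕ) = σ := by
    rw [← Real.rpow_natCast (σ ^ ((1:ℝ)/3)) 3, ← Real.rpow_mul hσ.le]
    norm_num
  -- (t/3)^{3/2} = σ b s / 3
  have hX : 0 < (t/3) ^ ((3:ℝ)/2) := Real.rpow_pos_of_pos ht3 _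
  have hXsq : ((t/3) ^ ((3:ℝ)/2)) ^ (2:ℕ) = (t/3) ^ (3:ℕ) := by
    rw [← Real.rpow_natCast ((t/3) ^ ((3:ℝ)/2)) 2, ← Real.rpow_mul ht3.le,
      ← Real.rpow_natCast (t/3) 3]
    norm_num
  have h32 : (t/3) ^ ((3:ℝ)/2) = σ * b * s / 3 := by
    have h1 : (σ * b * s / 3) ^ (2:ℕ) = (t/3) ^ (3:ℕ) := by
      have htc : t ^ (3:ℕ) = σ * b ^ 3 := by
        rw [htdef, mul_pow, hcube]
      have hs2' : 3 * σ * s ^ 2 = b := by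
        rw [hs2]; field_simp
      linear_combination (σ*b^2/27) * hs2' - (1/27) * htc
    have h2 : ((t/3) ^ ((3:ℝ)/2)) ^ (2:ℕ) = (σ * b * s / 3) ^ (2:ℕ) := by
      rw [hXsq, h1]
    have hpos : (0:ℝ) ≤ σ * b * s / 3 := by positivity
    nlinarith [hX]
  have hA : (t/3) ^ (-(3:ℝ)/2) = 3 / (σ * b * s) := by
    rw [show (-(3:ℝ)/2) = -((3:ℝ)/2) by ring, Real.rpow_neg ht3.le, h32]
    field_simp
  set r : ℝ := α / 8 * (t/3) ^ (-(3:ℝ)/2) with hrdef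
  have hr : r = 3 * α / (8 * σ * b * s) := by rw [hrdef, hA]; ring
  have hr0 : 0 < r := by rw [hr]; positivity
  -- r < 1
  have hr1 : r < 1 := by
    have hα2 : (α ^ ((2:ℝ)/3)) ^ (3:ℕ) = α ^ (2:ℕ) := by
      rw [← Real.rpow_natCast (α ^ ((2:ℝ)/3)) 3, ← Real.rpow_mul hα.le,
        ← Real.rpow_natCast α 2]
      norm_num
    have hcubelt : (α/8) ^ (2:ℕ) < (t/3) ^ (3:ℕ) := by
      have ht' : 3/4 * α ^ ((2:ℝ)/3) < t := hb
      have h3 : (3/4 * α ^ ((2:ℝ)/3)) ^ (3:ℕ) < t ^ (3:ℕ) :=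
        pow_lt_pow_left₀ ht' (by positivity) (by norm_num)
      nlinarith [hα2]
    have hlt : α / 8 < (t/3) ^ ((3:ℝ)/2) := by
      refine lt_of_pow_lt_pow_left₀ 2 hX.le ?_
      rw [hXsq]; exact hcubelt
    rw [hrdef, show (-(3:ℝ)/2) = -((3:ℝ)/2) by ring, Real.rpow_neg ht3.le,
      ← div_eq_mul_inv, div_lt_one hX]
    linarith
  set φ : ℝ := Real.arccos r with hφdef
  have hcosφ : Real.cos φ = r := Real.cos_arccos (by linarith) hr1.le
  have hφ0 : 0 < φ := Real.arccos_pos.2 hr1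
  have hφπ : φ < Real.pi / 2 := by
    rw [hφdef, Real.arccos_lt_pi_div_two]; exact hr0
  set u : ℝ := Real.pi/3 - φ/3 with hudef
  set c : ℝ := Real.cos u with hcdef
  have hu1 : 0 < u := by rw [hudef]; linarith [Real.pi_pos]
  have hu2 : u < Real.pi / 2 := by rw [hudef]; linarith [Real.pi_pos]
  have hc0 : 0 < c := Real.cos_pos_of_mem_Ioo ⟨by linarith [Real.pi_pos], hu2⟩
  -- triple angle
  have htriple : 4 * c ^ 3 - 3 * c = -r := by
    have h3u : 3 * u = Real.pi - φ := by rw [hudef]; ring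
    have := Real.cos_three_mul u
    rw [h3u, Real.cos_pi_sub, hcosφ] at this
    linarith
  -- rewrite xstar
  have hxs : xstar = 4 * b * c ^ 2 / (3 * σ) := by
    rw [hx]
    have h2u : 2/3 * Real.pi - 2/3 * φ = 2 * u := by rw [hudef]; ring
    rw [h2u, Real.cos_two_mul]
    rw [← hcdef]
    field_simp
    ring
  have hxpos : 0 < xstar := by rw [hxs]; positivity
  refine ⟨hxpos, ?_⟩
  have hsqrt : Real.sqrt xstar = 2 * c * s := by
    have : xstar = (2 * c * s) ^ 2 := by
      rw [hxs]
      linear_combination (-4*c^2) * hs2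
    rw [this, Real.sqrt_sq (by positivity)]
  rw [hsqrt, hxs]
  have key : (4*c^3 - 3*c) * (8*σ*b*s) = -(3*α) := by
    rw [htriple, hr]; field_simp
  have hdiv : α / (2*(2*c*s)) = 2*σ*b - 8*σ*b*c^2/3 := by
    rw [div_eq_iff (by positivity)]
    linear_combination (1/3) * key
  rw [hdiv]
  field_simp
  ring
end

section
/- Let x ∈ ℝ with x ≠ 0 and let h ∈ ℝ satisfy |x + h| > |x|. Then √(|x + h|) − √(|x|) − h · sign(x) / (2 √(|x|)) ≥ − h² / (8 |x|^{3/2}). -/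
/-- For `x ≠ 0` and `|x + h| > |x|`:
`√|x+h| − √|x| − h·sign(x)/(2√|x|) ≥ −h²/(8|x|^{3/2})`. -/
theorem sqrt_abs_expansion_lower_bound (x h : ℝ) (hx : x ≠ 0) (hxh : |x| < |x + h|) :
    -(h ^ 2 / (8 * |x| ^ ((3 : ℝ) / 2)))
      ≤ Real.sqrt (|x + h|) - Real.sqrt (|x|) - h * Real.sign x / (2 * Real.sqrt (|x|)) := by
  have ha : (0:ℝ) < |x| := abs_pos.mpr hx
  set sa := Real.sqrt (|x|) with hsa
  set sb := Real.sqrt (|x + h|) with hsb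
  have hsa2 : sa ^ 2 = |x| := Real.sq_sqrt (abs_nonneg x)
  have hsb2 : sb ^ 2 = |x + h| := Real.sq_sqrt (abs_nonneg _)
  have hsapos : 0 < sa := Real.sqrt_pos.mpr ha
  have hsbgt : sa < sb := Real.sqrt_lt_sqrt (abs_nonneg x) hxh
  have hrpow : |x| ^ ((3 : ℝ) / 2) = |x| * sa := by
    rw [show (3:ℝ)/2 = 1 + 1/2 by norm_num, Real.rpow_add ha, Real.rpow_one,
      hsa, Real.sqrt_eq_rpow]
  have hsign : h * Real.sign x ≤ |x + h| - |x| := by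
    rcases hx.lt_or_gt with hxn | hxp
    · rw [Real.sign_of_neg hxn, abs_of_neg hxn]
      have := neg_abs_le (x + h)
      linarith
    · rw [Real.sign_of_pos hxp, abs_of_pos hxp]
      have := le_abs_self (x + h)
      linarith
  have hba : |x + h| - |x| ≤ |h| := by
    have := abs_sub_abs_le_abs_sub (x + h) x
    simpa using this
  have habs : |h| ^ 2 = h ^ 2 := sq_abs h
  have hbapos : 0 < |x + h| - |x| := by linarith
  have hsq : (sb ^ 2 - sa ^ 2) ^ 2 ≤ h ^ 2 := by
    rw [hsa2, hsb2, ← habs]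
    have h0 : 0 ≤ |x + h| - |x| := le_of_lt hbapos
    nlinarith [abs_nonneg h]
  rw [hrpow, ← hsa2]
  have key : (sb - sa) ^ 2 * (4 * sa ^ 2) ≤ h ^ 2 := by
    nlinarith [sq_nonneg (sb - sa), sq_nonneg ((sb - sa) * (sb - sa))]
  have e1 : h * Real.sign x / (2 * sa) ≤ (sb ^ 2 - sa ^ 2) / (2 * sa) := by
    gcongr
    rw [hsa2, hsb2]; exact hsign
  have e2 : sb - sa - (sb ^ 2 - sa ^ 2) / (2 * sa) = -((sb - sa) ^ 2 / (2 * sa)) := by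
    field_simp
    ring
  have e3 : (sb - sa) ^ 2 / (2 * sa) ≤ h ^ 2 / (8 * (sa ^ 2 * sa)) := by
    rw [div_le_div_iff₀ (by positivity) (by positivity)]
    nlinarith [key, mul_pos hsapos hsapos]
  have e4 : -(h ^ 2 / (8 * (sa ^ 2 * sa))) ≤ sb - sa - (sb ^ 2 - sa ^ 2) / (2 * sa) := by
    rw [e2]
    linarith
  linarith
end
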